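/- If finite ranked posets P and Q each admit a symmetric chain decomposition, then the product poset P × Q (with rank the sum of the ranks) admits a symmetric chain decomposition. -/
import Mathlib


/-- A symmetric chain in a finite ranked poset: a saturated chain (successive elements
increase and raise the rank by exactly 1) whose minimal and maximal ranks sum to `N`. -/
def IsSymmChain {P : Type*} [PartialOrder P] [DecidableEq P]
    (rk : P → ℤ) (N : ℤ) (C : Finset P) : Prop :=
  ∃ (k : ℕ) (v : Fin (k + 1) → P),
    (∀ i : Fin k, v i.castSucc < v i.succ ∧ rk (v i.succ) = rk (v i.castSucc) + 1) ∧
    C = Finset.image v Finset.univ ∧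
    rk (v 0) + rk (v (Fin.last k)) = N

/-- A finite ranked poset admits a symmetric chain decomposition. -/
def HasSCD (P : Type*) [PartialOrder P] [Fintype P] [DecidableEq P]
    (rk : P → ℤ) (N : ℤ) : Prop :=
  ∃ 𝒞 : Finset (Finset P),
    (∀ C ∈ 𝒞, IsSymmChain rk N C) ∧ ∀ p : P, ∃! C, C ∈ 𝒞 ∧ p ∈ C

set_option linter.unusedSectionVars false

section Aux

variable {P : Type*} [PartialOrder P] [DecidableEq P]
variable {Q : Type*} [PartialOrder Q] [DecidableEq Q]

def NatChain (rk : P → ℤ) (N : ℤ) (C : Finset P) (k : ℕ) (v : ℕ → P) : Prop :=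
  (∀ i < k, v i < v (i+1) ∧ rk (v (i+1)) = rk (v i) + 1) ∧
  C = (Finset.range (k+1)).image v ∧ rk (v 0) + rk (v k) = N

lemma natChain_of_isSymmChain {rk : P → ℤ} {N : ℤ} {C : Finset P}
    (h : IsSymmChain rk N C) : ∃ k v, NatChain rk N C k v := by
  obtain ⟨k, v, hstep, hC, hN⟩ := h
  refine ⟨k, fun n => v ⟨min n k, by omega⟩, ?_, ?_, ?_⟩
  · intro i hi
    have e1 : (⟨min i k, by omega⟩ : Fin (k+1)) = (⟨i, hi⟩ : Fin k).castSucc := by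
      ext; simp; omega
    have e2 : (⟨min (i+1) k, by omega⟩ : Fin (k+1)) = (⟨i, hi⟩ : Fin k).succ := by
      ext; simp; omega
    dsimp only
    rw [e1, e2]; exact hstep ⟨i, hi⟩
  · rw [hC]; ext x
    simp only [Finset.mem_image, Finset.mem_univ, true_and, Finset.mem_range]
    constructor
    · rintro ⟨i, rfl⟩
      refine ⟨i.val, by omega, ?_⟩
      congr 1; ext; simp; omega
    · rintro ⟨n, hn, rfl⟩
      exact ⟨⟨min n k, by omega⟩, rfl⟩
  · have e0 : (⟨min 0 k, by omega⟩ : Fin (k+1)) = 0 := by ext; simp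
    have ek : (⟨min k k, by omega⟩ : Fin (k+1)) = Fin.last k := by ext; simp [Fin.last]
    dsimp only
    rw [e0, ek]; exact hN

lemma isSymmChain_of_natChain {rk : P → ℤ} {N : ℤ} {C : Finset P} {k : ℕ} {v : ℕ → P}
    (h : NatChain rk N C k v) : IsSymmChain rk N C := by
  obtain ⟨hstep, hC, hN⟩ := h
  refine ⟨k, fun i => v i.val, ?_, ?_, ?_⟩
  · intro i; exact hstep i.val i.isLt
  · rw [hC]; ext x
    simp only [Finset.mem_image, Finset.mem_univ, true_and, Finset.mem_range]
    constructor
    · rintro ⟨n, hn, rfl⟩; exact ⟨⟨n, hn⟩, rfl⟩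
    · rintro ⟨i, rfl⟩; exact ⟨i.val, i.isLt, rfl⟩
  · exact hN

lemma chain_rank {rk : P → ℤ} {k : ℕ} {v : ℕ → P}
    (hstep : ∀ i < k, v i < v (i+1) ∧ rk (v (i+1)) = rk (v i) + 1) :
    ∀ a, a ≤ k → rk (v a) = rk (v 0) + a := by
  intro a
  induction a with
  | zero => simp
  | succ n ih =>
    intro h
    rw [(hstep n (by omega)).2, ih (by omega)]
    push_cast; ring

lemma chain_lt {k : ℕ} {v : ℕ → P} (hstep : ∀ i < k, v i < v (i+1)) :
    ∀ a b, a < b → b ≤ k → v a < v b := by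
  intro a b
  induction b with
  | zero => omega
  | succ n ih =>
    intro hab hbk
    rcases Nat.lt_or_ge a n with h | h
    · exact lt_trans (ih h (by omega)) (hstep n (by omega))
    · have : a = n := by omega
      subst this; exact hstep a (by omega)

lemma chain_inj {k : ℕ} {v : ℕ → P} (hstep : ∀ i < k, v i < v (i+1)) {a b : ℕ}
    (ha : a ≤ k) (hb : b ≤ k) (h : v a = v b) : a = b := by
  rcases Nat.lt_trichotomy a b with hl | he | hl
  · exact absurd h (ne_of_lt (chain_lt hstep a b hl hb))
  · exact he
  · exact absurd h.symm (ne_of_lt (chain_lt hstep b a hl ha))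

lemma hookChain {rkP : P → ℤ} {rkQ : Q → ℤ} {k m : ℕ} {v : ℕ → P} {w : ℕ → Q}
    (hv : ∀ i < k, v i < v (i+1) ∧ rkP (v (i+1)) = rkP (v i) + 1)
    (hw : ∀ i < m, w i < w (i+1) ∧ rkQ (w (i+1)) = rkQ (w i) + 1)
    (i : ℕ) (hik : i ≤ k) (him : i ≤ m) :
    NatChain (fun x => rkP x.1 + rkQ x.2)
      (rkP (v 0) + rkP (v k) + (rkQ (w 0) + rkQ (w m)))
      ((Finset.range ((k-i)+(m-i)+1)).image (fun n => (v (i + (n - (m-i))), w (min n (m-i)))))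
      ((k-i)+(m-i)) (fun n => (v (i + (n - (m-i))), w (min n (m-i)))) := by
  refine ⟨?_, rfl, ?_⟩
  · intro n hn
    dsimp only
    by_cases hc : n < m - i
    · have e0 : i + (n - (m-i)) = i := by omega
      have e1 : min n (m-i) = n := by omega
      have e2 : i + (n+1 - (m-i)) = i := by omega
      have e3 : min (n+1) (m-i) = n+1 := by omega
      rw [e0, e1, e2, e3]
      refine ⟨Prod.mk_lt_mk.mpr (Or.inr ⟨le_rfl, (hw n (by omega)).1⟩), ?_⟩
      rw [(hw n (by omega)).2]; ring
    · have e1 : min n (m-i) = m - i := by omega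
      have e3 : min (n+1) (m-i) = m - i := by omega
      have e2 : i + (n+1 - (m-i)) = (i + (n - (m-i))) + 1 := by omega
      have hak : i + (n - (m-i)) < k := by omega
      rw [e1, e2, e3]
      refine ⟨Prod.mk_lt_mk.mpr (Or.inl ⟨(hv _ hak).1, le_rfl⟩), ?_⟩
      rw [(hv _ hak).2]; ring
  · dsimp only
    have e0 : i + (0 - (m-i)) = i := by omega
    have e1 : min 0 (m-i) = 0 := by omega
    have e2 : i + ((k-i)+(m-i) - (m-i)) = k := by omega
    have e3 : min ((k-i)+(m-i)) (m-i) = m - i := by omega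
    rw [e0, e1, e2, e3]
    rw [chain_rank hv i hik, chain_rank hw (m-i) (by omega), chain_rank hw m le_rfl]
    have : ((m - i : ℕ) : ℤ) = (m : ℤ) - (i : ℕ) := by omega
    rw [this]; ring

lemma prod_chains {rkP : P → ℤ} {rkQ : Q → ℤ} {NP NQ : ℤ} {C : Finset P} {D : Finset Q}
    (hC : IsSymmChain rkP NP C) (hD : IsSymmChain rkQ NQ D) :
    ∃ ℋ : Finset (Finset (P × Q)),
      (∀ H ∈ ℋ, IsSymmChain (fun x => rkP x.1 + rkQ x.2) (NP + NQ) H) ∧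
      (∀ H ∈ ℋ, ∀ x ∈ H, x.1 ∈ C ∧ x.2 ∈ D) ∧
      (∀ x : P × Q, x.1 ∈ C → x.2 ∈ D → ∃! H, H ∈ ℋ ∧ x ∈ H) := by
  classical
  obtain ⟨k, v, hv, hCim, hvN⟩ := natChain_of_isSymmChain hC
  obtain ⟨m, w, hw, hDim, hwN⟩ := natChain_of_isSymmChain hD
  set Hk : ℕ → Finset (P × Q) := fun i =>
    (Finset.range ((k-i)+(m-i)+1)).image (fun n => (v (i + (n - (m-i))), w (min n (m-i))))
    with hHk
  have key : ∀ j ≤ min k m, ∀ x ∈ Hk j, ∃ a b, a ≤ k ∧ b ≤ m ∧ x = (v a, w b) ∧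
      ((j = a ∧ a + b ≤ m) ∨ (j = m - b ∧ m ≤ a + b)) := by
    intro j hj x hx
    rw [hHk] at hx
    obtain ⟨n, hn, rfl⟩ := Finset.mem_image.mp hx
    rw [Finset.mem_range] at hn
    exact ⟨j + (n - (m-j)), min n (m-j), by omega, by omega, rfl, by omega⟩
  have huniq : ∀ x : P × Q, ∀ j1 ≤ min k m, ∀ j2 ≤ min k m,
      x ∈ Hk j1 → x ∈ Hk j2 → Hk j1 = Hk j2 := by
    intro x j1 hj1 j2 hj2 h1 h2
    obtain ⟨a1, b1, ha1, hb1, he1, hc1⟩ := key j1 hj1 x h1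
    obtain ⟨a2, b2, ha2, hb2, he2, hc2⟩ := key j2 hj2 x h2
    rw [he1] at he2
    have hpq := Prod.mk.injEq .. ▸ he2
    have hab : a1 = a2 := chain_inj (fun i h => (hv i h).1) ha1 ha2 (congrArg Prod.fst he2)
    have hbb : b1 = b2 := chain_inj (fun i h => (hw i h).1) hb1 hb2 (congrArg Prod.snd he2)
    have : j1 = j2 := by omega
    rw [this]
  refine ⟨(Finset.range (min k m + 1)).image Hk, ?_, ?_, ?_⟩
  · intro H hH
    obtain ⟨i, hi, rfl⟩ := Finset.mem_image.mp hH
    rw [Finset.mem_range] at hi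
    have h1 := hookChain hv hw i (by omega) (by omega)
    have hNeq : rkP (v 0) + rkP (v k) + (rkQ (w 0) + rkQ (w m)) = NP + NQ := by
      rw [hvN, hwN]
    rw [← hNeq]
    exact isSymmChain_of_natChain h1
  · intro H hH x hx
    obtain ⟨i, hi, rfl⟩ := Finset.mem_image.mp hH
    rw [Finset.mem_range] at hi
    obtain ⟨a, b, ha, hb, rfl, -⟩ := key i (by omega) x hx
    constructor
    · rw [hCim]; exact Finset.mem_image.mpr ⟨a, Finset.mem_range.mpr (by omega), rfl⟩
    · rw [hDim]; exact Finset.mem_image.mpr ⟨b, Finset.mem_range.mpr (by omega), rfl⟩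
  · rintro ⟨p, q⟩ hp hq
    rw [hCim] at hp; rw [hDim] at hq
    obtain ⟨a, ha, hva⟩ := Finset.mem_image.mp hp
    obtain ⟨b, hb, hwb⟩ := Finset.mem_image.mp hq
    rw [Finset.mem_range] at ha hb
    have main : ∀ i ≤ min k m, (p, q) ∈ Hk i →
        ∃! H, H ∈ (Finset.range (min k m + 1)).image Hk ∧ (p, q) ∈ H := by
      intro i hile hmem
      refine ⟨Hk i, ⟨Finset.mem_image_of_mem Hk (Finset.mem_range.mpr (by omega)), hmem⟩, ?_⟩
      rintro H' ⟨hH', hx'⟩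
      obtain ⟨j, hj, rfl⟩ := Finset.mem_image.mp hH'
      rw [Finset.mem_range] at hj
      exact huniq (p, q) j (by omega) i hile hx' hmem
    by_cases hab : a + b ≤ m
    · refine main a (by omega) ?_
      rw [hHk]
      refine Finset.mem_image.mpr ⟨b, Finset.mem_range.mpr (by omega), ?_⟩
      have e1 : a + (b - (m - a)) = a := by omega
      have e2 : min b (m - a) = b := by omega
      rw [e1, e2, hva, hwb]
    · refine main (m - b) (by omega) ?_
      rw [hHk]
      refine Finset.mem_image.mpr ⟨b + (a - (m - b)), Finset.mem_range.mpr (by omega), ?_⟩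
      have e1 : (m - b) + (b + (a - (m - b)) - (m - (m - b))) = a := by omega
      have e2 : min (b + (a - (m - b))) (m - (m - b)) = b := by omega
      rw [e1, e2, hva, hwb]

end Aux

/-- The product of two finite ranked posets admitting symmetric chain decompositions
admits a symmetric chain decomposition (with rank the sum of the ranks). -/
theorem product_hasSCD {P Q : Type*} [PartialOrder P] [Fintype P] [DecidableEq P]
    [PartialOrder Q] [Fintype Q] [DecidableEq Q]
    (rkP : P → ℤ) (NP : ℤ) (rkQ : Q → ℤ) (NQ : ℤ)
    (hP : HasSCD P rkP NP) (hQ : HasSCD Q rkQ NQ) :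
    HasSCD (P × Q) (fun x => rkP x.1 + rkQ x.2) (NP + NQ) := by
  classical
  obtain ⟨𝒞P, h𝒞P, hcovP⟩ := hP
  obtain ⟨𝒞Q, h𝒞Q, hcovQ⟩ := hQ
  have hex : ∀ CD : Finset P × Finset Q, CD.1 ∈ 𝒞P → CD.2 ∈ 𝒞Q →
      ∃ ℋ : Finset (Finset (P × Q)),
        (∀ H ∈ ℋ, IsSymmChain (fun x => rkP x.1 + rkQ x.2) (NP + NQ) H) ∧
        (∀ H ∈ ℋ, ∀ x ∈ H, x.1 ∈ CD.1 ∧ x.2 ∈ CD.2) ∧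
        (∀ x : P × Q, x.1 ∈ CD.1 → x.2 ∈ CD.2 → ∃! H, H ∈ ℋ ∧ x ∈ H) :=
    fun CD h1 h2 => prod_chains (h𝒞P _ h1) (h𝒞Q _ h2)
  choose! ℋf hprop1 hprop2 hprop3 using hex
  refine ⟨(𝒞P ×ˢ 𝒞Q).biUnion ℋf, ?_, ?_⟩
  · intro H hH
    obtain ⟨CD, hCD, hHm⟩ := Finset.mem_biUnion.mp hH
    rw [Finset.mem_product] at hCD
    exact hprop1 CD hCD.1 hCD.2 H hHm
  · intro x
    obtain ⟨C, ⟨hCmem, hxC⟩, hCu⟩ := hcovP x.1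
    obtain ⟨D, ⟨hDmem, hxD⟩, hDu⟩ := hcovQ x.2
    obtain ⟨H, ⟨hHm, hxH⟩, hHu⟩ := hprop3 (C, D) hCmem hDmem x hxC hxD
    refine ⟨H, ⟨Finset.mem_biUnion.mpr ⟨(C, D),
      Finset.mem_product.mpr ⟨hCmem, hDmem⟩, hHm⟩, hxH⟩, ?_⟩
    rintro H' ⟨hH', hxH'⟩
    obtain ⟨CD', hCD', hH'm⟩ := Finset.mem_biUnion.mp hH'
    rw [Finset.mem_product] at hCD'
    obtain ⟨hx1, hx2⟩ := hprop2 CD' hCD'.1 hCD'.2 H' hH'm x hxH'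
    have hC1 : CD'.1 = C := hCu CD'.1 ⟨hCD'.1, hx1⟩
    have hC2 : CD'.2 = D := hDu CD'.2 ⟨hCD'.2, hx2⟩
    have : CD' = (C, D) := Prod.ext hC1 hC2
    rw [this] at hH'm
    exact hHu H' ⟨hH'm, hxH'⟩
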